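/- Let n,m be positive integers and λ a partition. Then λ satisfies λ_{n+1} ≤ m ≤ λ_n if and only if there exist partitions μ of length ≤ n and ν of length ≤ m such that λ = (μ_1+m, μ_2+m, …, μ_n+m, ν'_1, ν'_2, …); moreover, in that case the pair (μ,ν) is unique and is given by μ = e(λ) = (λ_1−m,…,λ_n−m) and ν = s(λ) = (max(0,λ'_1−n),…,max(0,λ'_m−n)). -/
import Mathlib


open MeasureTheory MvPolynomial Complex

noncomputable section

/-- A partition: a weakly decreasing, finitely supported sequence of naturals
(`f i` is the part `λ_{i+1}`). -/
structure Ptn where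
  f : ℕ → ℕ
  anti : ∀ ⦃i j : ℕ⦄, i ≤ j → f j ≤ f i
  fin : ∃ N, ∀ i, N ≤ i → f i = 0

namespace Ptn

/-- `|λ|`. -/
def size (l : Ptn) : ℕ := ∑ᶠ i, l.f i

lemma conj_finite (l : Ptn) (k : ℕ) : {j | k + 1 ≤ l.f j}.Finite := by
  obtain ⟨N, hN⟩ := l.fin
  apply Set.Finite.subset (Set.finite_Iio N)
  intro j hj
  simp only [Set.mem_setOf_eq] at hj
  by_contra h
  simp only [Set.mem_Iio, not_lt] at h
  have := hN j h
  omega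

/-- The conjugate partition `λ'` (`conj.f k = λ'_{k+1} = #{j : λ_j ≥ k+1}`). -/
def conj (l : Ptn) : Ptn where
  f := fun k => {j | k + 1 ≤ l.f j}.ncard
  anti := by
    intro i j hij
    refine Set.ncard_le_ncard ?_ (l.conj_finite i)
    intro x hx
    simp only [Set.mem_setOf_eq] at hx ⊢
    omega
  fin := by
    refine ⟨l.f 0, fun k hk => ?_⟩
    have h : {j | k + 1 ≤ l.f j} = ∅ := by
      ext j
      simp only [Set.mem_setOf_eq, Set.mem_empty_iff_false, iff_false, not_le]
      have := l.anti (Nat.zero_le j)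
      omega
    show {j | k + 1 ≤ l.f j}.ncard = 0
    rw [h, Set.ncard_empty]

/-- `e(λ; n, m) = (max(0, λ_1 - m), …, max(0, λ_n - m))`. -/
def ePtn (l : Ptn) (n m : ℕ) : Ptn where
  f := fun j => if j < n then l.f j - m else 0
  anti := by
    intro i j hij
    by_cases hj : j < n
    · have hi : i < n := lt_of_le_of_lt hij hj
      simp only [if_pos hj, if_pos hi]
      exact Nat.sub_le_sub_right (l.anti hij) m
    · simp only [if_neg hj]
      exact Nat.zero_le _
  fin := ⟨n, fun i hi => by simp only [if_neg (Nat.not_lt.mpr hi)]⟩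

/-- `s(λ; n, m) = (max(0, λ'_1 - n), …, max(0, λ'_m - n))`. -/
def sPtn (l : Ptn) (n m : ℕ) : Ptn where
  f := fun k => if k < m then l.conj.f k - n else 0
  anti := by
    intro i j hij
    by_cases hj : j < m
    · have hi : i < m := lt_of_le_of_lt hij hj
      simp only [if_pos hj, if_pos hi]
      exact Nat.sub_le_sub_right (l.conj.anti hij) n
    · simp only [if_neg hj]
      exact Nat.zero_le _
  fin := ⟨m, fun i hi => by simp only [if_neg (Nat.not_lt.mpr hi)]⟩

end Ptn

lemma ncard_Iio_nat (t : ℕ) : (Set.Iio t).ncard = t := by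
  rw [← Finset.coe_Iio, Set.ncard_coe_finset, Nat.card_Iio]

lemma ncard_Iic_nat (t : ℕ) : (Set.Iic t).ncard = t + 1 := by
  rw [← Finset.coe_Iic, Set.ncard_coe_finset, Nat.card_Iic]

lemma Ptn.conj_ge_iff (l : Ptn) (k c : ℕ) : k + 1 ≤ l.conj.f c ↔ c + 1 ≤ l.f k := by
  have hdef : l.conj.f c = {j | c + 1 ≤ l.f j}.ncard := rfl
  constructor
  · intro h
    by_contra hc
    push_neg at hc
    have hsub : {j | c + 1 ≤ l.f j} ⊆ Set.Iio k := by
      intro j hj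
      simp only [Set.mem_setOf_eq] at hj
      by_contra hjk
      simp only [Set.mem_Iio, not_lt] at hjk
      have := l.anti hjk
      omega
    have hle := Set.ncard_le_ncard hsub (Set.finite_Iio k)
    rw [ncard_Iio_nat] at hle
    omega
  · intro h
    have hsub : Set.Iic k ⊆ {j | c + 1 ≤ l.f j} := by
      intro j hj
      have := l.anti (Set.mem_Iic.mp hj)
      simp only [Set.mem_setOf_eq]
      omega
    have hle := Set.ncard_le_ncard hsub (l.conj_finite c)
    rw [ncard_Iic_nat] at hle
    omega

/-- `λ_{n+1} ≤ m ≤ λ_n` iff `λ = (μ_1+m, …, μ_n+m, ν'_1, ν'_2, …)` for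
(necessarily unique) partitions `μ` of length `≤ n` and `ν` of length `≤ m`; in that case
`μ = e(λ)` and `ν = s(λ)`. -/
theorem box_condition_iff (n m : ℕ) (hn : 0 < n) (hm : 0 < m) (lam : Ptn) :
    ((lam.f n ≤ m ∧ m ≤ lam.f (n - 1)) ↔
      ∃ mu nu : Ptn, (∀ j, n ≤ j → mu.f j = 0) ∧ (∀ k, m ≤ k → nu.f k = 0) ∧
        (∀ j < n, lam.f j = mu.f j + m) ∧ (∀ k, lam.f (n + k) = nu.conj.f k)) ∧
    (∀ mu nu : Ptn, (∀ j, n ≤ j → mu.f j = 0) → (∀ k, m ≤ k → nu.f k = 0) →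
      (∀ j < n, lam.f j = mu.f j + m) → (∀ k, lam.f (n + k) = nu.conj.f k) →
      mu.f = (lam.ePtn n m).f ∧ nu.f = (lam.sPtn n m).f) := by
  have key : ∀ (nu : Ptn) (k i : ℕ), k + 1 ≤ nu.conj.f i ↔ i + 1 ≤ nu.f k := by
    intro nu k i
    exact nu.conj_ge_iff k i
  constructor
  · constructor
    · rintro ⟨h1, h2⟩
      refine ⟨lam.ePtn n m, lam.sPtn n m, ?_, ?_, ?_, ?_⟩
      · intro j hj
        simp only [Ptn.ePtn, if_neg (Nat.not_lt.mpr hj)]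
      · intro k hk
        simp only [Ptn.sPtn, if_neg (Nat.not_lt.mpr hk)]
      · intro j hj
        have : m ≤ lam.f j := le_trans h2 (lam.anti (by omega))
        simp only [Ptn.ePtn, if_pos hj]
        omega
      · intro k
        have hdef : (lam.sPtn n m).conj.f k
            = {j | k + 1 ≤ (lam.sPtn n m).f j}.ncard := rfl
        have hset : {j | k + 1 ≤ (lam.sPtn n m).f j} = Set.Iio (lam.f (n + k)) := by
          ext j
          simp only [Set.mem_setOf_eq, Set.mem_Iio, Ptn.sPtn]
          have hnk : lam.f (n + k) ≤ m := le_trans (lam.anti (by omega)) h1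
          by_cases hj : j < m
          · rw [if_pos hj]
            have hA := lam.conj_ge_iff (n + k) j
            constructor
            · intro h
              have : n + k + 1 ≤ lam.conj.f j := by omega
              have := hA.mp this
              omega
            · intro h
              have : n + k + 1 ≤ lam.conj.f j := hA.mpr (by omega)
              omega
          · rw [if_neg hj]
            constructor
            · intro h; omega
            · intro h; omega
        rw [hdef, hset, ncard_Iio_nat]
    · rintro ⟨mu, nu, hmu, hnu, hlam1, hlam2⟩
      constructor
      · have h0 : lam.f n = nu.conj.f 0 := by simpa using hlam2 0
        have hdef : nu.conj.f 0 = {j | 0 + 1 ≤ nu.f j}.ncard := rfl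
        have hsub : {j | 0 + 1 ≤ nu.f j} ⊆ Set.Iio m := by
          intro j hj
          simp only [Set.mem_setOf_eq] at hj
          by_contra hjm
          simp only [Set.mem_Iio, not_lt] at hjm
          have := hnu j hjm
          omega
        have := Set.ncard_le_ncard hsub (Set.finite_Iio m)
        rw [ncard_Iio_nat] at this
        omega
      · have := hlam1 (n - 1) (by omega)
        omega
  · intro mu nu hmu hnu hlam1 hlam2
    have hnuval : ∀ k < m, lam.conj.f k = n + nu.f k := by
      intro k hk
      have hdef : lam.conj.f k = {j | k + 1 ≤ lam.f j}.ncard := rfl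
      have hset : {j | k + 1 ≤ lam.f j} = Set.Iio (n + nu.f k) := by
        ext j
        simp only [Set.mem_setOf_eq, Set.mem_Iio]
        by_cases hj : j < n
        · have := hlam1 j hj
          constructor
          · intro _; omega
          · intro _; omega
        · push_neg at hj
          obtain ⟨i, rfl⟩ := Nat.exists_eq_add_of_le hj
          rw [hlam2 i]
          rw [nu.conj_ge_iff k i]
          omega
      rw [hdef, hset, ncard_Iio_nat]
    constructor
    · funext j
      by_cases hj : j < n
      · have := hlam1 j hj
        simp only [Ptn.ePtn, if_pos hj]
        omega
      · push_neg at hj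
        simp only [Ptn.ePtn, if_neg (Nat.not_lt.mpr hj)]
        exact hmu j hj
    · funext k
      by_cases hk : k < m
      · have := hnuval k hk
        simp only [Ptn.sPtn, if_pos hk]
        omega
      · push_neg at hk
        simp only [Ptn.sPtn, if_neg (Nat.not_lt.mpr hk)]
        exact hnu k hk

end
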